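/- For n ≥ 1 and 1 ≤ k ≤ n−1, the map (u_1, ..., u_n) ↦ ((u_1, ..., u_k), (u_{k+1}, ..., u_n)) is a bijection from the set A_{n,k} of sequences with 1 ≤ u_i ≤ n satisfying condition (1) whose largest index i with u_i > i equals k, onto the Cartesian product F_k^(n−k−1) × B_{n−k}, where F_k^(m) is the set of sequences (w_1,...,w_k) with 1 ≤ w_i ≤ k + m + 1, w_k > k, satisfying condition (1), and B_m is the set of sequences (v_1,...,v_m) with 1 ≤ v_i ≤ i satisfying condition (1). -/
import Mathlib


def gc (n k : ℕ) : ℚ := ((k : ℚ) + 1) / (2 * (n : ℚ) + (k : ℚ) + 1) * ((2 * n + k + 1).choose n : ℚ)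

def cat (n : ℕ) : ℚ := 1 / ((n : ℚ) + 1) * ((2 * n).choose n : ℚ)

def Cond {n : ℕ} (u : Fin n → ℕ) : Prop :=
  ∀ i j : Fin n, i < j →
    ¬(1 ≤ (u j : ℤ) - (((j : ℕ) : ℤ) - ((i : ℕ) : ℤ)) ∧
      (u j : ℤ) - (((j : ℕ) : ℤ) - ((i : ℕ) : ℤ)) ≤ (u i : ℤ) - 1)

theorem stmt15 (n k : ℕ) (hn : 1 ≤ n) (hk1 : 1 ≤ k) (hk2 : k ≤ n - 1) :
    Set.BijOn
      (fun u : Fin n → ℕ =>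
        ((fun i : Fin k => u ⟨(i : ℕ), by omega⟩),
         (fun i : Fin (n - k) => u ⟨k + (i : ℕ), by omega⟩)))
      {u : Fin n → ℕ | (∀ i, 1 ≤ u i ∧ u i ≤ n) ∧ Cond u ∧
        k < u ⟨k - 1, by omega⟩ ∧ (∀ j : Fin n, k < (j : ℕ) + 1 → u j ≤ (j : ℕ) + 1)}
      (({w : Fin k → ℕ | (∀ i, 1 ≤ w i ∧ w i ≤ k + (n - k - 1) + 1) ∧
          k < w ⟨k - 1, by omega⟩ ∧ Cond w} : Set (Fin k → ℕ)) ×ˢ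
       ({v : Fin (n - k) → ℕ | (∀ i : Fin (n - k), 1 ≤ v i ∧ v i ≤ (i : ℕ) + 1) ∧ Cond v} :
          Set (Fin (n - k) → ℕ))) := by
  have hnk : k + (n - k - 1) + 1 = n := by omega
  refine ⟨?_, ?_, ?_⟩
  · -- MapsTo
    rintro u ⟨hb, hc, hk', hle⟩
    constructor
    · -- first component
      refine ⟨?_, ?_, ?_⟩
      · intro i
        show 1 ≤ u ⟨(i : ℕ), by omega⟩ ∧ u ⟨(i : ℕ), by omega⟩ ≤ k + (n - k - 1) + 1
        have := hb ⟨(i : ℕ), by omega⟩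
        omega
      · show k < u ⟨(((⟨k - 1, by omega⟩ : Fin k) : ℕ)), by omega⟩
        exact hk'
      · intro i j hij
        show ¬(1 ≤ (u ⟨(j : ℕ), by omega⟩ : ℤ) - (((j : ℕ) : ℤ) - ((i : ℕ) : ℤ)) ∧
          (u ⟨(j : ℕ), by omega⟩ : ℤ) - (((j : ℕ) : ℤ) - ((i : ℕ) : ℤ)) ≤
            (u ⟨(i : ℕ), by omega⟩ : ℤ) - 1)
        have := hc ⟨(i : ℕ), by omega⟩ ⟨(j : ℕ), by omega⟩ (Fin.mk_lt_mk.mpr hij)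
        exact this
    · -- second component
      refine ⟨?_, ?_⟩
      · intro i
        show 1 ≤ u ⟨k + (i : ℕ), by omega⟩ ∧ u ⟨k + (i : ℕ), by omega⟩ ≤ (i : ℕ) + 1
        have h1 := hb ⟨k + (i : ℕ), by omega⟩
        have h2 := hle ⟨k + (i : ℕ), by omega⟩ (by simp only [Fin.val_mk]; omega)
        have h3 := hc ⟨k - 1, by omega⟩ ⟨k + (i : ℕ), by omega⟩ (Fin.mk_lt_mk.mpr (by omega))
        simp only [Fin.val_mk] at h1 h2 h3
        refine ⟨h1.1, ?_⟩
        omega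
      · intro i j hij
        show ¬(1 ≤ (u ⟨k + (j : ℕ), by omega⟩ : ℤ) - (((j : ℕ) : ℤ) - ((i : ℕ) : ℤ)) ∧
          (u ⟨k + (j : ℕ), by omega⟩ : ℤ) - (((j : ℕ) : ℤ) - ((i : ℕ) : ℤ)) ≤
            (u ⟨k + (i : ℕ), by omega⟩ : ℤ) - 1)
        have := hc ⟨k + (i : ℕ), by omega⟩ ⟨k + (j : ℕ), by omega⟩ (Fin.mk_lt_mk.mpr (by omega))
        simp only [Fin.val_mk] at this
        omega
  · -- InjOn
    rintro u ⟨hb, hc, hk', hle⟩ u' ⟨hb', hc', hk'', hle'⟩ h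
    have h1 := congrArg Prod.fst h
    have h2 := congrArg Prod.snd h
    simp only at h1 h2
    funext x
    by_cases hx : (x : ℕ) < k
    · have := congrFun h1 ⟨(x : ℕ), hx⟩
      simpa using this
    · have hx2 : (x : ℕ) - k < n - k := by omega
      have := congrFun h2 ⟨(x : ℕ) - k, hx2⟩
      simp only at this
      have ex : (⟨k + ((⟨(x : ℕ) - k, hx2⟩ : Fin (n - k)) : ℕ), by omega⟩ : Fin n) = x :=
        Fin.ext (by simp only [Fin.val_mk]; omega)
      rwa [ex] at this
  · -- SurjOn
    rintro ⟨w, v⟩ ⟨⟨hwb, hwk, hwc⟩, hvb, hvc⟩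
    refine ⟨fun i : Fin n => if h : (i : ℕ) < k then w ⟨(i : ℕ), h⟩
        else v ⟨(i : ℕ) - k, by omega⟩, ⟨?_, ?_, ?_, ?_⟩, ?_⟩
    · intro i
      by_cases h : (i : ℕ) < k
      · simp only [dif_pos h]
        have := hwb ⟨(i : ℕ), h⟩
        rwa [hnk] at this
      · simp only [dif_neg h]
        have := hvb ⟨(i : ℕ) - k, by omega⟩
        simp only [Fin.val_mk] at this
        omega
    · intro i j hij
      simp only [Fin.lt_def] at hij
      by_cases hi : (i : ℕ) < k <;> by_cases hj : (j : ℕ) < k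
      · simp only [dif_pos hi, dif_pos hj]
        have := hwc ⟨(i : ℕ), hi⟩ ⟨(j : ℕ), hj⟩ (Fin.mk_lt_mk.mpr hij)
        simpa using this
      · -- i < k ≤ j : first conjunct fails
        simp only [dif_pos hi, dif_neg hj]
        have := hvb ⟨(j : ℕ) - k, by omega⟩
        simp only [Fin.val_mk] at this
        omega
      · omega
      · simp only [dif_neg hi, dif_neg hj]
        have := hvc ⟨(i : ℕ) - k, by omega⟩ ⟨(j : ℕ) - k, by omega⟩
          (Fin.mk_lt_mk.mpr (by omega))
        simp only [Fin.val_mk] at this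
        omega
    · have hlt : k - 1 < k := by omega
      simp only [Fin.val_mk, dif_pos hlt]
      exact hwk
    · intro j hj
      have hj' : ¬ (j : ℕ) < k := by omega
      simp only [dif_neg hj']
      have := hvb ⟨(j : ℕ) - k, by omega⟩
      simp only [Fin.val_mk] at this
      omega
    · simp only [Prod.mk.injEq]
      constructor
      · funext i
        have hi : (i : ℕ) < k := i.isLt
        simp only [Fin.val_mk, dif_pos hi]
      · funext i
        have hi : ¬ (k + (i : ℕ) < k) := by omega
        simp only [Fin.val_mk, dif_neg hi]
        congr 1
        exact Fin.ext (by simp only [Fin.val_mk]; omega)
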